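/- Gaussian isoperimetric-type L¹ heat semigroup bound in ℝⁿ: for every smooth compactly supported f : ℝⁿ → ℝ and every t > 0, ‖P_t f − f‖_{L¹(ℝⁿ)} ≤ √(2t) · ‖∇f‖_{L¹(ℝⁿ)}. -/

import Mathlib

open MeasureTheory Real Filter Set


-- scalar helper: u * exp(-b u) ≤ (2/b) exp(-(b/2) u) for u ≥ 0
lemma helper_exp {b : ℝ} (hb : 0 < b) {u : ℝ} (hu : 0 ≤ u) :
    u * rexp (-b * u) ≤ 2 / b * rexp (-(b / 2) * u) := by
  have h1 : b / 2 * u ≤ rexp (b / 2 * u) := by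
    have := Real.add_one_le_exp (b / 2 * u); linarith
  have h2 : u ≤ 2 / b * rexp (b / 2 * u) := by
    rw [← sub_nonneg]
    have heq : 2 / b * rexp (b / 2 * u) - u = (2/b) * (rexp (b/2*u) - b/2*u) := by
      field_simp
    rw [heq]
    have : 0 ≤ rexp (b/2*u) - b/2*u := by linarith
    positivity
  calc u * rexp (-b * u) ≤ (2 / b * rexp (b / 2 * u)) * rexp (-b * u) := by
        apply mul_le_mul_of_nonneg_right h2 (le_of_lt (Real.exp_pos _))
    _ = 2 / b * rexp (-(b / 2) * u) := by
        rw [mul_assoc, ← Real.exp_add]; ring_nf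

lemma integrable_sq_mul_exp {b : ℝ} (hb : 0 < b) :
    Integrable (fun x : ℝ => x ^ 2 * rexp (-b * x ^ 2)) := by
  have : Integrable (fun x : ℝ => 2 / b * rexp (-(b / 2) * x ^ 2)) :=
    (integrable_exp_neg_mul_sq (by positivity)).const_mul _
  refine this.mono ?_ ?_
  · exact (continuous_pow 2).mul (by fun_prop)|>.aestronglyMeasurable
  · filter_upwards with x
    have h := helper_exp hb (sq_nonneg x)
    rw [Real.norm_eq_abs, Real.norm_eq_abs, abs_of_nonneg (by positivity),
      abs_of_nonneg (by positivity)]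
    exact h

lemma tendsto_mul_exp_sq {b : ℝ} (hb : 0 < b) :
    Tendsto (fun x : ℝ => x * rexp (-b * x ^ 2)) atTop (nhds 0) := by
  have hg : Tendsto (fun x : ℝ => 2 / b * rexp (-(b / 2) * x)) atTop (nhds 0) := by
    have h1 : Tendsto (fun x : ℝ => b / 2 * x) atTop atTop :=
      Tendsto.const_mul_atTop (by positivity) tendsto_id
    have h2 : Tendsto (fun x : ℝ => rexp (-(b / 2 * x))) atTop (nhds 0) :=
      Real.tendsto_exp_neg_atTop_nhds_zero.comp h1
    simpa [neg_mul, mul_zero] using h2.const_mul (2 / b)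
  apply squeeze_zero' ?_ ?_ hg
  · filter_upwards [eventually_ge_atTop (0:ℝ)] with x hx; positivity
  · filter_upwards [eventually_ge_atTop (1:ℝ)] with x hx
    have h1 : x * rexp (-b * x ^ 2) ≤ x ^ 2 * rexp (-b * x ^ 2) := by
      have : x ≤ x ^ 2 := by nlinarith
      exact mul_le_mul_of_nonneg_right this (le_of_lt (Real.exp_pos _))
    have h2 : x ^ 2 * rexp (-b * x ^ 2) ≤ 2 / b * rexp (-(b / 2) * x ^ 2) := by
      have := helper_exp hb (sq_nonneg x); exact this
    have h3 : 2 / b * rexp (-(b / 2) * x ^ 2) ≤ 2 / b * rexp (-(b / 2) * x) := by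
      apply mul_le_mul_of_nonneg_left _ (by positivity)
      apply Real.exp_le_exp.2
      have hx2 : x ≤ x ^ 2 := by nlinarith
      have := mul_le_mul_of_nonneg_left hx2 (le_of_lt (half_pos hb))
      linarith
    linarith

lemma integral_sq_mul_exp {b : ℝ} (hb : 0 < b) :
    ∫ x : ℝ, x ^ 2 * rexp (-b * x ^ 2) = (2 * b)⁻¹ * Real.sqrt (π / b) := by
  set F : ℝ → ℝ := fun x => -(x * rexp (-b * x ^ 2)) / (2 * b) with hFdef
  have hF : ∀ x, HasDerivAt F (x ^ 2 * rexp (-b * x ^ 2) - rexp (-b * x ^ 2) / (2 * b)) x := by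
    intro x
    have hexp : HasDerivAt (fun x : ℝ => rexp (-b * x ^ 2)) (rexp (-b * x ^ 2) * (-b * (2 * x ^ 1))) x :=
      (HasDerivAt.exp ((hasDerivAt_pow 2 x).const_mul (-b)))
    have h1 : HasDerivAt (fun x : ℝ => x * rexp (-b * x ^ 2))
        (1 * rexp (-b * x ^ 2) + x * (rexp (-b * x ^ 2) * (-b * (2 * x ^ 1)))) x :=
      (hasDerivAt_id x).mul hexp
    have h2 := (h1.neg).div_const (2 * b)
    refine h2.congr_deriv ?_
    rw [eq_sub_iff_add_eq, ← add_div, div_eq_iff (by positivity)]; ring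
  have hcont : Continuous F := by fun_prop
  have hFtop : Tendsto F atTop (nhds 0) := by
    have h0 := ((tendsto_mul_exp_sq hb).neg).div_const (2 * b)
    rw [hFdef]
    simpa [neg_mul] using h0
  have hFbot : Tendsto F atBot (nhds 0) := by
    have h1 : Tendsto (fun x : ℝ => (-x) * rexp (-b * (-x) ^ 2)) atBot (nhds 0) :=
      (tendsto_mul_exp_sq hb).comp tendsto_neg_atBot_atTop
    have h2 : Tendsto (fun x : ℝ => x * rexp (-b * x ^ 2)) atBot (nhds 0) := by
      have := h1.neg
      simp only [neg_neg, neg_zero, neg_mul] at this ⊢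
      simpa using this
    have h0 := (h2.neg).div_const (2 * b)
    rw [hFdef]
    simpa [neg_mul] using h0
  have hint : Integrable (fun x : ℝ => x ^ 2 * rexp (-b * x ^ 2) - rexp (-b * x ^ 2) / (2 * b)) :=
    (integrable_sq_mul_exp hb).sub ((integrable_exp_neg_mul_sq hb).div_const _)
  have hIic := integral_Iic_of_hasDerivAt_of_tendsto (a := (0:ℝ)) (hcont.continuousWithinAt)
    (fun x _ => hF x) (hint.integrableOn) hFbot
  have hIoi := integral_Ioi_of_hasDerivAt_of_tendsto (a := (0:ℝ)) (hcont.continuousWithinAt)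
    (fun x _ => hF x) (hint.integrableOn) hFtop
  have hsum := intervalIntegral.integral_Iic_add_Ioi (b := (0:ℝ)) (hint.integrableOn) (hint.integrableOn)
  have hF0 : F 0 = 0 := by simp [hFdef]
  have htot : ∫ x : ℝ, (x ^ 2 * rexp (-b * x ^ 2) - rexp (-b * x ^ 2) / (2 * b)) = 0 := by
    rw [← hsum, hIic, hIoi, hF0]; ring
  rw [integral_sub (integrable_sq_mul_exp hb) ((integrable_exp_neg_mul_sq hb).div_const _)]
    at htot
  have hgauss : ∫ x : ℝ, rexp (-b * x ^ 2) / (2 * b) = Real.sqrt (π / b) / (2 * b) := by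
    rw [integral_div, integral_gaussian]
  rw [sub_eq_zero] at htot
  rw [htot, hgauss]
  ring


variable {n : ℕ}

lemma integrable_gauss_n {b : ℝ} (hb : 0 < b) :
    Integrable (fun y : EuclideanSpace ℝ (Fin n) => rexp (-b * ‖y‖ ^ 2)) := by
  have h := GaussianFourier.integrable_cexp_neg_mul_sq_norm_add
    (V := EuclideanSpace ℝ (Fin n)) (b := (b : ℂ)) (by simpa using hb) 0 0
  refine h.norm.congr ?_
  filter_upwards with y
  simp [Complex.norm_exp, ← Complex.ofReal_pow]

lemma integral_gauss_n {b : ℝ} (hb : 0 < b) :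
    ∫ y : EuclideanSpace ℝ (Fin n), rexp (-b * ‖y‖ ^ 2) = Real.sqrt (π / b) ^ n := by
  rw [GaussianFourier.integral_rexp_neg_mul_sq_norm hb, finrank_euclideanSpace_fin]
  rw [Real.sqrt_eq_rpow, ← Real.rpow_natCast ((π / b) ^ ((1:ℝ)/2)) n,
    ← Real.rpow_mul (by positivity)]
  congr 1
  ring

lemma integral_gauss_coord {b : ℝ} (hb : 0 < b) (i : Fin n) :
    ∫ y : EuclideanSpace ℝ (Fin n), rexp (-b * ‖y‖ ^ 2) * (y i) ^ 2
      = (2 * b)⁻¹ * Real.sqrt (π / b) ^ n := by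
  have hmp := (EuclideanSpace.volume_preserving_symm_measurableEquiv_toLp (Fin n)).symm
  rw [← hmp.integral_comp (MeasurableEquiv.measurableEmbedding _)
    (fun y : EuclideanSpace ℝ (Fin n) => rexp (-b * ‖y‖ ^ 2) * (y i) ^ 2)]
  set f : Fin n → ℝ → ℝ := fun j s => (if j = i then s ^ 2 else 1) * rexp (-b * s ^ 2) with hf
  have key : ∀ x : Fin n → ℝ,
      rexp (-b * ‖((MeasurableEquiv.toLp 2 (Fin n → ℝ)) x : EuclideanSpace ℝ (Fin n))‖ ^ 2)
        * (((MeasurableEquiv.toLp 2 (Fin n → ℝ)) x : EuclideanSpace ℝ (Fin n)) i) ^ 2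
        = ∏ j, f j (x j) := by
    intro x
    have hnorm : ‖((MeasurableEquiv.toLp 2 (Fin n → ℝ)) x : EuclideanSpace ℝ (Fin n))‖ ^ 2
        = ∑ j, (x j) ^ 2 := by
      rw [EuclideanSpace.norm_eq, Real.sq_sqrt (Finset.sum_nonneg fun j _ => sq_nonneg _)]
      simp
    have happ : ((MeasurableEquiv.toLp 2 (Fin n → ℝ)) x : EuclideanSpace ℝ (Fin n)) i
        = x i := by
      simp
    rw [hnorm, happ, hf]
    simp only [Finset.prod_mul_distrib, Finset.prod_ite_eq', Finset.mem_univ, if_true,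
      ← Real.exp_sum]
    rw [mul_comm]
    congr 1
    rw [Finset.mul_sum]
  rw [MeasurableEquiv.symm_symm, integral_congr_ae (ae_of_all _ key), volume_pi, integral_fintype_prod_eq_prod f]
  have eachint : ∀ j, (∫ s : ℝ, f j s) = (if j = i then (2 * b)⁻¹ else 1) * Real.sqrt (π / b) := by
    intro j
    by_cases hj : j = i
    · simp only [hf, hj, if_true]
      exact integral_sq_mul_exp hb
    · simp only [hf, if_neg hj, one_mul]
      rw [integral_gaussian]
  rw [Finset.prod_congr rfl (fun j _ => eachint j), Finset.prod_mul_distrib,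
    Finset.prod_ite_eq', if_pos (Finset.mem_univ i), Finset.prod_const, Finset.card_univ,
    Fintype.card_fin]



variable {n : ℕ}

lemma integral_gauss_inner_sq {b : ℝ} (hb : 0 < b) (v : EuclideanSpace ℝ (Fin n)) :
    ∫ y : EuclideanSpace ℝ (Fin n), rexp (-b * ‖y‖ ^ 2) * (inner ℝ v y : ℝ) ^ 2
      = (2 * b)⁻¹ * Real.sqrt (π / b) ^ n * ‖v‖ ^ 2 := by
  by_cases hv : v = 0
  · simp [hv]
  · have hn : n ≠ 0 := by
      rintro rfl
      exact hv (Subsingleton.elim v 0)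
    haveI : NeZero n := ⟨hn⟩
    set u : EuclideanSpace ℝ (Fin n) := ‖v‖⁻¹ • v with hu
    have hnu : ‖u‖ = 1 := norm_smul_inv_norm hv
    have horth : Orthonormal ℝ (({0} : Set (Fin n)).restrict (fun _ => u)) := by
      rw [orthonormal_iff_ite]
      intro i j
      have hij : i = j := Subsingleton.elim i j
      rw [if_pos hij, hij]
      rw [real_inner_self_eq_norm_sq]; simp [Set.restrict, hnu]
    obtain ⟨B, hB⟩ := horth.exists_orthonormalBasis_extension_of_card_eq
      (by simp [finrank_euclideanSpace_fin])
    have hB0 : B 0 = u := hB 0 rfl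
    have hinner : ∀ y : EuclideanSpace ℝ (Fin n), (inner ℝ v y : ℝ) = ‖v‖ * B.repr y 0 := by
      intro y
      rw [B.repr_apply_apply, hB0, hu, real_inner_smul_left, ← mul_assoc,
        mul_inv_cancel₀ (norm_ne_zero_iff.2 hv), one_mul]
    have hMP := B.repr.measurePreserving
    have comp := hMP.integral_comp (B.repr.toHomeomorph.measurableEmbedding)
      (fun z : EuclideanSpace ℝ (Fin n) => rexp (-b * ‖z‖ ^ 2) * (‖v‖ * z 0) ^ 2)
    have hptwise : ∀ y : EuclideanSpace ℝ (Fin n),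
        rexp (-b * ‖y‖ ^ 2) * (inner ℝ v y : ℝ) ^ 2
          = (fun z : EuclideanSpace ℝ (Fin n) => rexp (-b * ‖z‖ ^ 2) * (‖v‖ * z 0) ^ 2)
              (B.repr y) := by
      intro y
      simp only []
      rw [hinner y, B.repr.norm_map]
    rw [integral_congr_ae (ae_of_all _ hptwise), comp]
    have hre : (fun z : EuclideanSpace ℝ (Fin n) => rexp (-b * ‖z‖ ^ 2) * (‖v‖ * z 0) ^ 2)
        = fun z => ‖v‖ ^ 2 * (rexp (-b * ‖z‖ ^ 2) * (z 0) ^ 2) := by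
      funext z; ring
    rw [hre, integral_const_mul, integral_gauss_coord hb 0]
    ring

lemma integrable_gauss_inner_sq {b : ℝ} (hb : 0 < b) (v : EuclideanSpace ℝ (Fin n)) :
    Integrable (fun y : EuclideanSpace ℝ (Fin n) => rexp (-b * ‖y‖ ^ 2) * (inner ℝ v y : ℝ) ^ 2) := by
  have hg : Integrable (fun y : EuclideanSpace ℝ (Fin n) =>
      ‖v‖ ^ 2 * (2 / b) * rexp (-(b / 2) * ‖y‖ ^ 2)) :=
    (integrable_gauss_n (by positivity)).const_mul _
  refine hg.mono ?_ ?_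
  · apply Continuous.aestronglyMeasurable
    exact (Real.continuous_exp.comp (by fun_prop)).mul
      ((continuous_const.inner continuous_id').pow 2)
  · filter_upwards with y
    have h1 : (inner ℝ v y : ℝ) ^ 2 ≤ (‖v‖ * ‖y‖) ^ 2 := by
      rw [← sq_abs (inner ℝ v y : ℝ)]
      exact pow_le_pow_left₀ (abs_nonneg _) (abs_real_inner_le_norm v y) 2
    have h2 : ‖y‖ ^ 2 * rexp (-b * ‖y‖ ^ 2) ≤ 2 / b * rexp (-(b / 2) * ‖y‖ ^ 2) :=
      helper_exp hb (sq_nonneg _)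
    rw [Real.norm_eq_abs, Real.norm_eq_abs, abs_of_nonneg (by positivity),
      abs_of_nonneg (by positivity)]
    calc rexp (-b * ‖y‖ ^ 2) * (inner ℝ v y : ℝ) ^ 2
        ≤ rexp (-b * ‖y‖ ^ 2) * (‖v‖ * ‖y‖) ^ 2 :=
          mul_le_mul_of_nonneg_left h1 (le_of_lt (Real.exp_pos _))
      _ = ‖v‖ ^ 2 * (‖y‖ ^ 2 * rexp (-b * ‖y‖ ^ 2)) := by ring
      _ ≤ ‖v‖ ^ 2 * (2 / b * rexp (-(b / 2) * ‖y‖ ^ 2)) :=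
          mul_le_mul_of_nonneg_left h2 (sq_nonneg _)
      _ = ‖v‖ ^ 2 * (2 / b) * rexp (-(b / 2) * ‖y‖ ^ 2) := by ring

lemma integrable_gauss_inner_abs {b : ℝ} (hb : 0 < b) (v : EuclideanSpace ℝ (Fin n)) :
    Integrable (fun y : EuclideanSpace ℝ (Fin n) => rexp (-b * ‖y‖ ^ 2) * |(inner ℝ v y : ℝ)|) := by
  have hg : Integrable (fun y : EuclideanSpace ℝ (Fin n) =>
      ‖v‖ * (rexp (-b * ‖y‖ ^ 2) + 2 / b * rexp (-(b / 2) * ‖y‖ ^ 2))) :=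
    ((integrable_gauss_n hb).add ((integrable_gauss_n (by positivity)).const_mul _)).const_mul _
  refine hg.mono ?_ ?_
  · apply Continuous.aestronglyMeasurable
    exact (Real.continuous_exp.comp (by fun_prop)).mul
      ((continuous_const.inner continuous_id').abs)
  · filter_upwards with y
    have h1 : |(inner ℝ v y : ℝ)| ≤ ‖v‖ * ‖y‖ := abs_real_inner_le_norm v y
    have h2 : ‖y‖ ≤ 1 + ‖y‖ ^ 2 := by nlinarith [sq_nonneg (‖y‖ - 1)]
    have h3 : ‖y‖ ^ 2 * rexp (-b * ‖y‖ ^ 2) ≤ 2 / b * rexp (-(b / 2) * ‖y‖ ^ 2) :=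
      helper_exp hb (sq_nonneg _)
    have hA : abs (rexp (-b * ‖y‖ ^ 2) * |(inner ℝ v y : ℝ)|) = rexp (-b * ‖y‖ ^ 2) * |(inner ℝ v y : ℝ)| :=
      abs_of_nonneg (mul_nonneg (Real.exp_pos _).le (abs_nonneg _))
    have hB : abs (‖v‖ * (rexp (-b * ‖y‖ ^ 2) + 2 / b * rexp (-(b / 2) * ‖y‖ ^ 2)))
        = ‖v‖ * (rexp (-b * ‖y‖ ^ 2) + 2 / b * rexp (-(b / 2) * ‖y‖ ^ 2)) :=
      abs_of_nonneg (by positivity)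
    rw [Real.norm_eq_abs, Real.norm_eq_abs, hA, hB]
    calc rexp (-b * ‖y‖ ^ 2) * |(inner ℝ v y : ℝ)|
        ≤ rexp (-b * ‖y‖ ^ 2) * (‖v‖ * (1 + ‖y‖ ^ 2)) := by
          apply mul_le_mul_of_nonneg_left _ (le_of_lt (Real.exp_pos _))
          calc |(inner ℝ v y : ℝ)| ≤ ‖v‖ * ‖y‖ := h1
            _ ≤ ‖v‖ * (1 + ‖y‖ ^ 2) := mul_le_mul_of_nonneg_left h2 (norm_nonneg _)
      _ = ‖v‖ * (rexp (-b * ‖y‖ ^ 2) + ‖y‖ ^ 2 * rexp (-b * ‖y‖ ^ 2)) := by ring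
      _ ≤ ‖v‖ * (rexp (-b * ‖y‖ ^ 2) + 2 / b * rexp (-(b / 2) * ‖y‖ ^ 2)) := by
          apply mul_le_mul_of_nonneg_left _ (norm_nonneg v)
          linarith

lemma key_moment {t : ℝ} (ht : 0 < t) (v : EuclideanSpace ℝ (Fin n)) :
    ∫ y : EuclideanSpace ℝ (Fin n),
        (4 * π * t) ^ (-(n : ℝ) / 2) * rexp (-(4 * t)⁻¹ * ‖y‖ ^ 2) * |(inner ℝ v y : ℝ)|
      ≤ Real.sqrt (2 * t) * ‖v‖ := by
  have hπt : (0:ℝ) < 4 * π * t := by positivity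
  set K : ℝ := (4 * π * t) ^ (-(n : ℝ) / 2) with hK
  have hKpos : 0 < K := Real.rpow_pos_of_pos hπt _
  set b : ℝ := (4 * t)⁻¹ with hb'
  have hb : 0 < b := by positivity
  have hπb : π / b = 4 * π * t := by rw [hb']; field_simp
  have h1 : Real.sqrt (π / b) ^ n = (4 * π * t) ^ ((n : ℝ) / 2) := by
    rw [hπb, Real.sqrt_eq_rpow, ← Real.rpow_natCast ((4*π*t) ^ ((1:ℝ)/2)) n,
      ← Real.rpow_mul (le_of_lt hπt)]
    congr 1; ring
  have hK1 : K * Real.sqrt (π / b) ^ n = 1 := by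
    rw [h1, hK, ← Real.rpow_add hπt,
      show (-(n:ℝ)/2 + (n:ℝ)/2) = 0 by ring, Real.rpow_zero]
  have h2b : (2 * b)⁻¹ = 2 * t := by rw [hb']; field_simp; ring
  have hq1 : ∫ y : EuclideanSpace ℝ (Fin n), K * rexp (-b * ‖y‖ ^ 2) = 1 := by
    rw [integral_const_mul, integral_gauss_n hb, hK1]
  have hq2 : ∫ y : EuclideanSpace ℝ (Fin n),
      K * (rexp (-b * ‖y‖ ^ 2) * (inner ℝ v y : ℝ) ^ 2) = 2 * t * ‖v‖ ^ 2 := by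
    rw [integral_const_mul, integral_gauss_inner_sq hb v]
    calc K * ((2 * b)⁻¹ * Real.sqrt (π / b) ^ n * ‖v‖ ^ 2)
        = (2 * b)⁻¹ * (K * Real.sqrt (π / b) ^ n) * ‖v‖ ^ 2 := by ring
      _ = 2 * t * ‖v‖ ^ 2 := by rw [hK1, h2b]; ring
  by_cases hv : v = 0
  · simp [hv]
  · set c : ℝ := Real.sqrt (2 * t) * ‖v‖ with hc'
    have hc : 0 < c := mul_pos (Real.sqrt_pos.2 (by linarith)) (norm_pos_iff.2 hv)
    have hcsq : c ^ 2 = 2 * t * ‖v‖ ^ 2 := by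
      rw [hc', mul_pow, Real.sq_sqrt (by linarith)]
    have hscal : ∀ a : ℝ, |a| ≤ (2 * c)⁻¹ * a ^ 2 + c / 2 := by
      intro a
      have h2 : 2 * c * |a| ≤ a ^ 2 + c ^ 2 := by nlinarith [sq_nonneg (|a| - c), sq_abs a]
      have heq : (2 * c)⁻¹ * a ^ 2 + c / 2 - |a| = (a ^ 2 + c ^ 2 - 2 * c * |a|) / (2 * c) := by
        field_simp
      have h3 : 0 ≤ (a ^ 2 + c ^ 2 - 2 * c * |a|) / (2 * c) :=
        div_nonneg (by linarith) (by positivity)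
      linarith [heq ▸ h3]
    have hmono : ∫ y : EuclideanSpace ℝ (Fin n), K * rexp (-b * ‖y‖ ^ 2) * |(inner ℝ v y : ℝ)|
        ≤ ∫ y : EuclideanSpace ℝ (Fin n),
            (2 * c)⁻¹ * (K * (rexp (-b * ‖y‖ ^ 2) * (inner ℝ v y : ℝ) ^ 2))
              + c / 2 * (K * rexp (-b * ‖y‖ ^ 2)) := by
      apply integral_mono_of_nonneg
      · filter_upwards with y; positivity
      · exact (((integrable_gauss_inner_sq hb v).const_mul K).const_mul _).add
          (((integrable_gauss_n hb).const_mul K).const_mul _)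
      · filter_upwards with y
        have h0 : 0 ≤ K * rexp (-b * ‖y‖ ^ 2) := by positivity
        calc K * rexp (-b * ‖y‖ ^ 2) * |(inner ℝ v y : ℝ)|
            ≤ K * rexp (-b * ‖y‖ ^ 2) * ((2 * c)⁻¹ * (inner ℝ v y : ℝ) ^ 2 + c / 2) :=
              mul_le_mul_of_nonneg_left (hscal _) h0
          _ = (2 * c)⁻¹ * (K * (rexp (-b * ‖y‖ ^ 2) * (inner ℝ v y : ℝ) ^ 2))
              + c / 2 * (K * rexp (-b * ‖y‖ ^ 2)) := by ring
    have hrhs : ∫ y : EuclideanSpace ℝ (Fin n),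
        (2 * c)⁻¹ * (K * (rexp (-b * ‖y‖ ^ 2) * (inner ℝ v y : ℝ) ^ 2))
          + c / 2 * (K * rexp (-b * ‖y‖ ^ 2)) = c := by
      have e1 : ∫ y : EuclideanSpace ℝ (Fin n),
          (2 * c)⁻¹ * (K * (rexp (-b * ‖y‖ ^ 2) * (inner ℝ v y : ℝ) ^ 2))
          = (2 * c)⁻¹ * (2 * t * ‖v‖ ^ 2) := by
        rw [integral_const_mul, hq2]
      have e2 : ∫ y : EuclideanSpace ℝ (Fin n), c / 2 * (K * rexp (-b * ‖y‖ ^ 2)) = c / 2 * 1 := by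
        rw [integral_const_mul, hq1]
      rw [integral_add (((integrable_gauss_inner_sq hb v).const_mul K).const_mul _)
        (((integrable_gauss_n hb).const_mul K).const_mul _), e1, e2, ← hcsq]
      field_simp
      ring
    calc ∫ y : EuclideanSpace ℝ (Fin n), K * rexp (-b * ‖y‖ ^ 2) * |(inner ℝ v y : ℝ)|
        ≤ _ := hmono
      _ = c := hrhs


variable {n : ℕ}

lemma ftc_bound {f : EuclideanSpace ℝ (Fin n) → ℝ} (hf : ContDiff ℝ (⊤ : ℕ∞) f)
    (x y : EuclideanSpace ℝ (Fin n)) :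
    |f (x - y) - f x| ≤ ∫ s in (0:ℝ)..1, |(inner ℝ (gradient f (x - s • y)) y : ℝ)| := by
  have hfd := hf.differentiable (by simp)
  set g : ℝ → ℝ := fun s => f (x - s • y) with hg
  have hderiv : ∀ s : ℝ, HasDerivAt g (fderiv ℝ f (x - s • y) (-y)) s := by
    intro s
    have h1 : HasDerivAt (fun s : ℝ => x - s • y) (-y) s := by
      simpa using ((hasDerivAt_id s).smul_const y).const_sub x
    exact ((hfd (x - s • y)).hasFDerivAt).comp_hasDerivAt s h1
  have hcont : Continuous fun s : ℝ => fderiv ℝ f (x - s • y) (-y) := by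
    have h2 : Continuous fun p : (EuclideanSpace ℝ (Fin n)) × (EuclideanSpace ℝ (Fin n)) =>
        fderiv ℝ f p.1 p.2 := hf.continuous_fderiv_apply (by simp)
    exact h2.comp ((continuous_const.sub (continuous_id'.smul continuous_const)).prodMk
      continuous_const)
  have hint : IntervalIntegrable (fun s => fderiv ℝ f (x - s • y) (-y)) volume 0 1 :=
    hcont.intervalIntegrable 0 1
  have heq : f (x - y) - f x = ∫ s in (0:ℝ)..1, fderiv ℝ f (x - s • y) (-y) := by
    rw [intervalIntegral.integral_eq_sub_of_hasDerivAt (fun s _ => hderiv s) hint]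
    simp [hg]
  rw [heq]
  calc |∫ s in (0:ℝ)..1, fderiv ℝ f (x - s • y) (-y)|
      ≤ ∫ s in (0:ℝ)..1, |fderiv ℝ f (x - s • y) (-y)| :=
        intervalIntegral.abs_integral_le_integral_abs zero_le_one
    _ = ∫ s in (0:ℝ)..1, |(inner ℝ (gradient f (x - s • y)) y : ℝ)| := by
        apply intervalIntegral.integral_congr
        intro s _
        show |(fderiv ℝ f (x - s • y)) (-y)| = |(inner ℝ (gradient f (x - s • y)) y : ℝ)|
        have h3 : (inner ℝ (gradient f (x - s • y)) y : ℝ) = fderiv ℝ f (x - s • y) y :=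
          InnerProductSpace.toDual_symm_apply
        rw [map_neg, abs_neg, h3]

lemma translate_bound {f : EuclideanSpace ℝ (Fin n) → ℝ} (hf : ContDiff ℝ (⊤ : ℕ∞) f)
    (hsupp : HasCompactSupport f) (y : EuclideanSpace ℝ (Fin n)) :
    ∫⁻ x, ENNReal.ofReal |f (x - y) - f x|
      ≤ ENNReal.ofReal (∫ x, |(inner ℝ (gradient f x) y : ℝ)|) := by
  have hgradcont : Continuous (gradient f) :=
    (LinearIsometryEquiv.continuous _).comp (hf.continuous_fderiv (by simp))
  have hgradsupp : HasCompactSupport (gradient f) :=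
    (hsupp.fderiv ℝ).comp_left (g := ⇑(InnerProductSpace.toDual ℝ
      (EuclideanSpace ℝ (Fin n))).symm) (map_zero _)
  have hAcont : Continuous fun x => |(inner ℝ (gradient f x) y : ℝ)| :=
    (hgradcont.inner continuous_const).abs
  have hAsupp : HasCompactSupport fun x => |(inner ℝ (gradient f x) y : ℝ)| :=
    hgradsupp.comp_left (g := fun w => |(inner ℝ w y : ℝ)|) (by simp)
  have hAint : Integrable fun x => |(inner ℝ (gradient f x) y : ℝ)| :=
    hAcont.integrable_of_hasCompactSupport hAsupp
  have hscont : ∀ s : ℝ, Continuous fun x : EuclideanSpace ℝ (Fin n) =>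
      |(inner ℝ (gradient f (x - s • y)) y : ℝ)| := fun s =>
    ((hgradcont.comp (continuous_id'.sub continuous_const)).inner continuous_const).abs
  have hxcont : ∀ x : EuclideanSpace ℝ (Fin n), Continuous fun s : ℝ =>
      |(inner ℝ (gradient f (x - s • y)) y : ℝ)| := fun x =>
    ((hgradcont.comp (continuous_const.sub (continuous_id'.smul continuous_const))).inner
      continuous_const).abs
  calc ∫⁻ x, ENNReal.ofReal |f (x - y) - f x|
      ≤ ∫⁻ x, ENNReal.ofReal (∫ s in (0:ℝ)..1, |(inner ℝ (gradient f (x - s • y)) y : ℝ)|) :=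
        lintegral_mono fun x => ENNReal.ofReal_le_ofReal (ftc_bound hf x y)
    _ = ∫⁻ x, ∫⁻ s in Ioc (0:ℝ) 1, ENNReal.ofReal |(inner ℝ (gradient f (x - s • y)) y : ℝ)| := by
        apply lintegral_congr
        intro x
        rw [intervalIntegral.integral_of_le zero_le_one,
          ofReal_integral_eq_lintegral_ofReal ((hxcont x).integrableOn_Ioc)
            (ae_of_all _ fun s => abs_nonneg _)]
    _ = ∫⁻ s in Ioc (0:ℝ) 1, ∫⁻ x, ENNReal.ofReal |(inner ℝ (gradient f (x - s • y)) y : ℝ)| := by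
        apply lintegral_lintegral_swap
        apply Measurable.aemeasurable
        apply (ENNReal.continuous_ofReal.comp ?_).measurable
        exact ((hgradcont.comp (continuous_fst.sub
          (continuous_snd.smul continuous_const))).inner continuous_const).abs
    _ = ∫⁻ s in Ioc (0:ℝ) 1, ∫⁻ x, ENNReal.ofReal |(inner ℝ (gradient f x) y : ℝ)| := by
        apply lintegral_congr
        intro s
        exact (measurePreserving_sub_right volume (s • y)).lintegral_comp
          ((ENNReal.continuous_ofReal.comp hAcont).measurable)
    _ = ENNReal.ofReal (∫ x, |(inner ℝ (gradient f x) y : ℝ)|) := by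
        rw [setLIntegral_const, Real.volume_Ioc,
          ofReal_integral_eq_lintegral_ofReal hAint (ae_of_all _ fun x => abs_nonneg _)]
        norm_num

/-- Pseudo-Poincaré inequality for the Gaussian heat semigroup:
`‖P_t f − f‖_{L¹} ≤ √(2t) ‖∇f‖_{L¹}`. -/
theorem pseudo_poincare_heat_semigroup (n : ℕ)
    (p : ℝ → EuclideanSpace ℝ (Fin n) → ℝ)
    (hp : ∀ t x, p t x = (4 * π * t) ^ (-(n : ℝ) / 2) * Real.exp (-‖x‖ ^ 2 / (4 * t)))
    (P : ℝ → (EuclideanSpace ℝ (Fin n) → ℝ) → EuclideanSpace ℝ (Fin n) → ℝ)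
    (hP : ∀ t f x, P t f x = ∫ y, p t (x - y) * f y)
    (f : EuclideanSpace ℝ (Fin n) → ℝ)
    (hf : ContDiff ℝ (⊤ : ℕ∞) f) (hsupp : HasCompactSupport f)
    (t : ℝ) (ht : 0 < t) :
    ∫ x, |P t f x - f x| ≤ Real.sqrt (2 * t) * ∫ x, ‖gradient f x‖ := by
  have hπt : (0:ℝ) < 4 * π * t := by positivity
  have hb : (0:ℝ) < (4 * t)⁻¹ := by positivity
  set q : EuclideanSpace ℝ (Fin n) → ℝ :=
    fun y => (4 * π * t) ^ (-(n : ℝ) / 2) * rexp (-(4 * t)⁻¹ * ‖y‖ ^ 2) with hqdef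
  have hqp : ∀ x, p t x = q x := by
    intro x
    rw [hp, hqdef]
    congr 2
    ring
  have hqcont : Continuous q := by
    rw [hqdef]
    exact continuous_const.mul (Real.continuous_exp.comp (by fun_prop))
  have hqpos : ∀ y, 0 ≤ q y := fun y =>
    mul_nonneg (Real.rpow_nonneg (by positivity) _) (Real.exp_pos _).le
  have hqint : Integrable q := (integrable_gauss_n hb).const_mul _
  have hq1 : ∫ y, q y = 1 := by
    rw [hqdef]
    rw [integral_const_mul, integral_gauss_n hb]
    have hπb : π / (4 * t)⁻¹ = 4 * π * t := by field_simp
    rw [hπb, Real.sqrt_eq_rpow, ← Real.rpow_natCast ((4*π*t) ^ ((1:ℝ)/2)) n,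
      ← Real.rpow_mul (le_of_lt hπt), ← Real.rpow_add hπt,
      show (-(n:ℝ)/2 + 1/2 * (n:ℝ)) = 0 by ring, Real.rpow_zero]
  have hfc : Continuous f := hf.continuous
  obtain ⟨C, hC⟩ : ∃ C, ∀ z, ‖f z‖ ≤ C := hsupp.exists_bound_of_continuous hfc
  have hgradcont : Continuous (gradient f) :=
    (LinearIsometryEquiv.continuous _).comp (hf.continuous_fderiv (by simp))
  have hgradsupp : HasCompactSupport (gradient f) :=
    (hsupp.fderiv ℝ).comp_left (g := ⇑(InnerProductSpace.toDual ℝ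
      (EuclideanSpace ℝ (Fin n))).symm) (map_zero _)
  have hgradint : Integrable (fun x => ‖gradient f x‖) :=
    (hgradcont.norm).integrable_of_hasCompactSupport hgradsupp.norm
  have hAint : ∀ y : EuclideanSpace ℝ (Fin n),
      Integrable fun x => |(inner ℝ (gradient f x) y : ℝ)| := fun y =>
    ((hgradcont.inner continuous_const).abs).integrable_of_hasCompactSupport
      (hgradsupp.comp_left (g := fun w => |(inner ℝ w y : ℝ)|) (by simp))
  -- convolution representation
  have hPt : ∀ x, P t f x = ∫ y, q y * f (x - y) := by
    intro x
    rw [hP]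
    simp only [hqp]
    have h := MeasureTheory.integral_sub_left_eq_self
      (fun z : EuclideanSpace ℝ (Fin n) => q z * f (x - z)) volume x
    simp only [sub_sub_cancel] at h
    exact h
  have hconv : Continuous (P t f) := by
    have hPeq : P t f = MeasureTheory.convolution q f (ContinuousLinearMap.mul ℝ ℝ) volume := by
      funext x
      rw [hPt x]
      rfl
    rw [hPeq]
    exact HasCompactSupport.continuous_convolution_right _ hsupp
      (hqcont.locallyIntegrable) hfc
  have hint1 : ∀ x, Integrable (fun y => q y * f (x - y)) := by
    intro x
    have hfm : AEStronglyMeasurable (fun y : EuclideanSpace ℝ (Fin n) => f (x - y)) volume :=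
      (hfc.comp (continuous_const.sub continuous_id')).aestronglyMeasurable
    have h := hqint.bdd_mul hfm (ae_of_all _ fun y => hC _)
    simpa [mul_comm] using h
  have hptid : ∀ x, P t f x - f x = ∫ y, q y * (f (x - y) - f x) := by
    intro x
    have hint2 : Integrable (fun y => q y * f x) := hqint.mul_const _
    calc P t f x - f x = (∫ y, q y * f (x - y)) - (∫ y, q y) * f x := by
          rw [hPt x, hq1, one_mul]
      _ = (∫ y, q y * f (x - y)) - (∫ y, q y * f x) := by rw [integral_mul_const]
      _ = ∫ y, (q y * f (x - y) - q y * f x) := (integral_sub (hint1 x) hint2).symm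
      _ = ∫ y, q y * (f (x - y) - f x) := by
          congr 1
          funext y
          ring
  -- key per-x bound
  have hkey : ∀ x, (∫ y, q y * |(inner ℝ (gradient f x) y : ℝ)|)
      ≤ Real.sqrt (2 * t) * ‖gradient f x‖ := fun x => key_moment ht (gradient f x)
  have hqabs_int : ∀ x, Integrable fun y => q y * |(inner ℝ (gradient f x) y : ℝ)| := by
    intro x
    refine ((integrable_gauss_inner_abs hb (gradient f x)).const_mul
      ((4 * π * t) ^ (-(n : ℝ) / 2))).congr (ae_of_all _ fun y => ?_)
    rw [hqdef]
    ring
  -- the main ENNReal chain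
  have main : (∫⁻ x, ENNReal.ofReal |P t f x - f x|)
      ≤ ENNReal.ofReal (Real.sqrt (2 * t) * ∫ x, ‖gradient f x‖) := by
    have hm1 : AEMeasurable (Function.uncurry fun x y : EuclideanSpace ℝ (Fin n) =>
        ENNReal.ofReal (q y * |f (x - y) - f x|)) (volume.prod volume) := by
      apply Measurable.aemeasurable
      apply (ENNReal.continuous_ofReal.comp ?_).measurable
      exact (hqcont.comp continuous_snd).mul
        (((hfc.comp (continuous_fst.sub continuous_snd)).sub (hfc.comp continuous_fst)).abs)
    have hm2 : AEMeasurable (Function.uncurry fun y x : EuclideanSpace ℝ (Fin n) =>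
        ENNReal.ofReal (q y * |(inner ℝ (gradient f x) y : ℝ)|)) (volume.prod volume) := by
      apply Measurable.aemeasurable
      apply (ENNReal.continuous_ofReal.comp ?_).measurable
      exact (hqcont.comp continuous_fst).mul
        (((hgradcont.comp continuous_snd).inner continuous_fst).abs)
    calc ∫⁻ x, ENNReal.ofReal |P t f x - f x|
        ≤ ∫⁻ x, ∫⁻ y, ENNReal.ofReal (q y * |f (x - y) - f x|) := by
          apply lintegral_mono
          intro x
          dsimp only
          rw [hptid x]
          calc ENNReal.ofReal |∫ y, q y * (f (x - y) - f x)|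
              = ↑‖∫ y, q y * (f (x - y) - f x)‖₊ := by
                rw [← Real.norm_eq_abs]; exact ofReal_norm (∫ y, q y * (f (x - y) - f x))
            _ ≤ ∫⁻ y, ↑‖q y * (f (x - y) - f x)‖₊ :=
                enorm_integral_le_lintegral_enorm _
            _ = ∫⁻ y, ENNReal.ofReal (q y * |f (x - y) - f x|) := by
                apply lintegral_congr
                intro y
                exact (ofReal_norm (q y * (f (x - y) - f x))).symm.trans (by rw [Real.norm_eq_abs, abs_mul,
                  abs_of_nonneg (hqpos y)])
      _ = ∫⁻ y, ∫⁻ x, ENNReal.ofReal (q y * |f (x - y) - f x|) :=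
          lintegral_lintegral_swap hm1
      _ ≤ ∫⁻ y, ENNReal.ofReal (q y) *
            ENNReal.ofReal (∫ x, |(inner ℝ (gradient f x) y : ℝ)|) := by
          apply lintegral_mono
          intro y
          dsimp only
          have hmx : Measurable fun x : EuclideanSpace ℝ (Fin n) =>
              ENNReal.ofReal |f (x - y) - f x| := by
            apply (ENNReal.continuous_ofReal.comp ?_).measurable
            exact ((hfc.comp (continuous_id'.sub continuous_const)).sub hfc).abs
          have hre : ∫⁻ x, ENNReal.ofReal (q y * |f (x - y) - f x|)
              = ENNReal.ofReal (q y) * ∫⁻ x, ENNReal.ofReal |f (x - y) - f x| := by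
            rw [← lintegral_const_mul _ hmx]
            apply lintegral_congr
            intro x
            rw [ENNReal.ofReal_mul (hqpos y)]
          rw [hre]
          exact mul_le_mul_right (translate_bound hf hsupp y) _
      _ = ∫⁻ y, ∫⁻ x, ENNReal.ofReal (q y * |(inner ℝ (gradient f x) y : ℝ)|) := by
          apply lintegral_congr
          intro y
          have hmx : Measurable fun x : EuclideanSpace ℝ (Fin n) =>
              ENNReal.ofReal |(inner ℝ (gradient f x) y : ℝ)| := by
            apply (ENNReal.continuous_ofReal.comp ?_).measurable
            exact (hgradcont.inner continuous_const).abs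
          rw [ofReal_integral_eq_lintegral_ofReal (hAint y)
            (ae_of_all _ fun x => abs_nonneg _), ← lintegral_const_mul _ hmx]
          apply lintegral_congr
          intro x
          rw [ENNReal.ofReal_mul (hqpos y)]
      _ = ∫⁻ x, ∫⁻ y, ENNReal.ofReal (q y * |(inner ℝ (gradient f x) y : ℝ)|) :=
          lintegral_lintegral_swap hm2
      _ ≤ ∫⁻ x, ENNReal.ofReal (Real.sqrt (2 * t) * ‖gradient f x‖) := by
          apply lintegral_mono
          intro x
          dsimp only
          rw [← ofReal_integral_eq_lintegral_ofReal (hqabs_int x)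
            (ae_of_all _ fun y => mul_nonneg (hqpos y) (abs_nonneg _))]
          exact ENNReal.ofReal_le_ofReal (hkey x)
      _ = ENNReal.ofReal (Real.sqrt (2 * t) * ∫ x, ‖gradient f x‖) := by
          rw [← ofReal_integral_eq_lintegral_ofReal (hgradint.const_mul _)
            (ae_of_all _ fun x => mul_nonneg (Real.sqrt_nonneg _) (norm_nonneg _)),
            integral_const_mul]
  have hRHS : 0 ≤ Real.sqrt (2 * t) * ∫ x, ‖gradient f x‖ :=
    mul_nonneg (Real.sqrt_nonneg _) (integral_nonneg fun x => norm_nonneg _)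
  rw [integral_eq_lintegral_of_nonneg_ae (f := fun x => |P t f x - f x|) (ae_of_all _ fun x => abs_nonneg _)
    ((hconv.sub hfc).abs.aestronglyMeasurable)]
  calc (∫⁻ x, ENNReal.ofReal |P t f x - f x|).toReal
      ≤ (ENNReal.ofReal (Real.sqrt (2 * t) * ∫ x, ‖gradient f x‖)).toReal :=
        ENNReal.toReal_mono ENNReal.ofReal_ne_top main
    _ = Real.sqrt (2 * t) * ∫ x, ‖gradient f x‖ := ENNReal.toReal_ofReal hRHS
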